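/- arXiv:1212.5386 — 2 statements merged into one kernel-verified Lean document; each statement's English description precedes it below -/
import Mathlib

section
/- There is a constant C > 0 such that for all n ≥ 1, |E[(T_n − 2/n)^2] − 4/(3n^3)| ≤ C/n^4; equivalently, the second central moment of T_n satisfies E[(T_n − 2/n)^2] = (4/(3n^3))(1 + O(1/n)) as n → ∞. -/
/-!
Write `T n = ∑ₖ wₖ Xₖ` with `Xₖ = S (k + n + 1)` i.i.d. standard exponentials and
`wₖ = 2 / ((k + n) (k + n + 1))`. Expanding the square of this series of nonnegative terms and
integrating term by term (independence off the diagonal, `E[X²] = 2` on it) gives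
`E[(T n)²] = (∑ wₖ)² + ∑ wₖ²`, so the variance is `∑ wₖ²`. Both series telescope:
`wₖ = 2/(k + n) - 2/(k + n + 1)`, so `∑ wₖ = 2/n`, and
`wₖ² = (4/3) (1/(k + n)³ - 1/(k + n + 1)³) - eₖ` with `0 ≤ eₖ ≤ (2/3) wₖ / n⁴`, so
`∑ wₖ²` is within `4/(3n⁵)` of `4/(3n³)`.
-/

open MeasureTheory ProbabilityTheory Filter Topology
open scoped ENNReal Nat

lemma Antitone.hasSum_sub_succ {f : ℕ → ℝ} (hf : Antitone f) {l : ℝ}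
    (hl : Tendsto f atTop (𝓝 l)) : HasSum (fun k => f k - f (k + 1)) (f 0 - l) := by
  rw [hasSum_iff_tendsto_nat_of_nonneg fun k => sub_nonneg.2 (hf k.le_succ)]
  simpa only [Finset.sum_range_sub'] using tendsto_const_nhds.sub hl

lemma hasSum_inv_add_pow_sub {x : ℝ} (hx : 0 < x) {p : ℕ} (hp : p ≠ 0) :
    HasSum (fun k : ℕ => ((k + x) ^ p)⁻¹ - ((k + 1 + x) ^ p)⁻¹) (x ^ p)⁻¹ := by
  have hanti : Antitone fun k : ℕ => ((k + x) ^ p)⁻¹ := fun k l hkl => by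
    have : (k : ℝ) ≤ l := Nat.cast_le.2 hkl
    dsimp only
    gcongr
  have hlim : Tendsto (fun k : ℕ => ((k + x) ^ p)⁻¹) atTop (𝓝 0) :=
    ((tendsto_pow_atTop hp).comp
      (tendsto_atTop_add_const_right _ x tendsto_natCast_atTop_atTop)).inv_tendsto_atTop
  simpa using hanti.hasSum_sub_succ hlim

/-- For `x = n`, `kingmanWeight x k = 2 / (i (i - 1))` with `i = k + n + 1` is the mean time the
coalescent spends with `i` lines. -/
noncomputable def kingmanWeight (x : ℝ) (k : ℕ) : ℝ := 2 / ((k + x) * (k + x + 1))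

section KingmanWeight

variable {x : ℝ}

lemma kingmanWeight_nonneg (hx : 0 ≤ x) (k : ℕ) : 0 ≤ kingmanWeight x k := by
  unfold kingmanWeight
  positivity

lemma hasSum_kingmanWeight (hx : 0 < x) : HasSum (kingmanWeight x) (2 / x) := by
  have h := (hasSum_inv_add_pow_sub hx one_ne_zero).mul_left 2
  rw [pow_one, ← div_eq_mul_inv] at h
  refine h.congr_fun fun k => ?_
  have : 0 < k + x := by positivity
  rw [kingmanWeight]
  field_simp
  ring

lemma kingmanWeight_sq (hx : 0 < x) (k : ℕ) :
    kingmanWeight x k ^ 2 = 4 / 3 * (((k + x) ^ 3)⁻¹ - ((k + 1 + x) ^ 3)⁻¹)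
      - 2 / 3 * kingmanWeight x k / ((k + x) * (k + x + 1)) ^ 2 := by
  have : 0 < k + x := by positivity
  simp only [kingmanWeight]
  field_simp
  ring

theorem hasSum_kingmanWeight_sq (hx : 0 < x) :
    ∃ v, HasSum (fun k => kingmanWeight x k ^ 2) v ∧ |v - 4 / 3 / x ^ 3| ≤ 4 / 3 / x ^ 5 := by
  set e : ℕ → ℝ := fun k => 2 / 3 * kingmanWeight x k / ((k + x) * (k + x + 1)) ^ 2
  have he₀ : ∀ k, 0 ≤ e k := fun k => by
    have := kingmanWeight_nonneg hx.le k
    positivity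
  have he_le : ∀ k, e k ≤ 2 / 3 / x ^ 4 * kingmanWeight x k := fun k => by
    have : x ^ 2 ≤ (k + x) * (k + x + 1) := by nlinarith [(k.cast_nonneg : (0 : ℝ) ≤ k)]
    calc e k ≤ 2 / 3 * kingmanWeight x k / (x ^ 2) ^ 2 := by
          have := kingmanWeight_nonneg hx.le k
          simp only [e]
          gcongr
      _ = 2 / 3 / x ^ 4 * kingmanWeight x k := by ring
  have hw := (hasSum_kingmanWeight hx).mul_left (2 / 3 / x ^ 4)
  obtain ⟨E, hE⟩ : Summable e := .of_nonneg_of_le he₀ he_le hw.summable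
  refine ⟨4 / 3 / x ^ 3 - E, ?_, ?_⟩
  · have h := ((hasSum_inv_add_pow_sub hx three_ne_zero).mul_left (4 / 3)).sub hE
    rw [← div_eq_mul_inv] at h
    exact h.congr_fun (kingmanWeight_sq hx)
  · rw [sub_sub_cancel_left, abs_neg, abs_of_nonneg (hE.nonneg he₀)]
    calc E ≤ 2 / 3 / x ^ 4 * (2 / x) := hasSum_le he_le hE hw
      _ = 4 / 3 / x ^ 5 := by ring

end KingmanWeight

lemma tsum_ite_eq_tsum_kingmanWeight (n : ℕ) (s : ℕ → ℝ) :
    ∑' i : ℕ, (if n + 1 ≤ i then 2 * s i / ((i : ℝ) * ((i : ℝ) - 1)) else 0)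
      = ∑' k, kingmanWeight n k * s (k + (n + 1)) := by
  rw [← (add_left_injective (n + 1)).tsum_eq]
  · refine tsum_congr fun k => ?_
    rw [if_pos (Nat.le_add_left _ _), kingmanWeight]
    push_cast
    ring
  · intro i hi
    have : n + 1 ≤ i := by_contra fun h => hi (if_neg h)
    exact ⟨i - (n + 1), Nat.sub_add_cancel this⟩

lemma lintegral_ofReal_pow_expMeasure_one (p : ℕ) :
    ∫⁻ x, ENNReal.ofReal x ^ p ∂expMeasure 1 = p ! := by
  have hdensity : ∀ x, gammaPDF 1 1 x * ENNReal.ofReal x ^ p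
      = Set.indicator (Set.Ici 0) (fun x => ENNReal.ofReal (Real.exp (-x) * x ^ p)) x := by
    intro x
    rcases lt_or_ge x 0 with hx | hx
    · simp [gammaPDF_of_neg hx, hx]
    · rw [Set.indicator_of_mem (Set.mem_Ici.2 hx), gammaPDF_of_nonneg hx,
        ENNReal.ofReal_mul (Real.exp_pos _).le, ENNReal.ofReal_pow hx]
      simp
  have hGamma : ∫ x in Set.Ioi 0, Real.exp (-x) * x ^ p = p ! := by
    rw [← Real.Gamma_nat_eq_factorial, Real.Gamma_eq_integral (by positivity)]
    simp [← Real.rpow_natCast]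
  rw [expMeasure, gammaMeasure, lintegral_withDensity_eq_lintegral_mul _
      (show Measurable (gammaPDF 1 1) from (measurable_gammaPDFReal 1 1).ennreal_ofReal)
      (by fun_prop)]
  simp only [Pi.mul_apply, hdensity]
  rw [lintegral_indicator measurableSet_Ici, setLIntegral_congr Ioi_ae_eq_Ici.symm,
    ← ofReal_integral_eq_lintegral_ofReal, hGamma, ENNReal.ofReal_natCast]
  · have h := Real.GammaIntegral_convergent (s := p + 1) (by positivity)
    simp only [add_sub_cancel_right, Real.rpow_natCast] at h
    exact h
  · filter_upwards [ae_restrict_mem measurableSet_Ioi] with x hx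
    have : 0 < x := hx
    positivity

section Probability

variable {Ω : Type*} [MeasurableSpace Ω] {μ : Measure Ω}

lemma aemeasurable_of_map_eq_expMeasure {X : Ω → ℝ} (hX : μ.map X = expMeasure 1) :
    AEMeasurable X μ :=
  AEMeasurable.of_map_ne_zero (hX ▸ (isProbabilityMeasure_expMeasure one_pos).ne_zero)

lemma ae_nonneg_of_map_eq_expMeasure {X : Ω → ℝ} (hX : μ.map X = expMeasure 1) :
    0 ≤ᵐ[μ] X := by
  have hneg : expMeasure 1 (Set.Iio 0) = 0 := by
    rw [expMeasure, gammaMeasure, withDensity_apply _ measurableSet_Iio]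
    exact lintegral_gammaPDF_of_nonpos le_rfl
  have hae : ∀ᵐ y ∂μ.map X, 0 ≤ y := by
    rw [hX]
    simpa using measure_eq_zero_iff_ae_notMem.1 hneg
  exact ae_of_ae_map (aemeasurable_of_map_eq_expMeasure hX) hae

lemma lintegral_ofReal_pow_of_map_eq_expMeasure {X : Ω → ℝ} (hX : μ.map X = expMeasure 1)
    (p : ℕ) : ∫⁻ ω, ENNReal.ofReal (X ω) ^ p ∂μ = p ! := by
  rw [← lintegral_map' (f := fun x => ENNReal.ofReal x ^ p) (by fun_prop)
    (aemeasurable_of_map_eq_expMeasure hX), hX, lintegral_ofReal_pow_expMeasure_one]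

variable {ι : Type*} [Countable ι]

lemma lintegral_tsum_mul_tsum {F : ι → Ω → ℝ≥0∞} (hF : ∀ i, AEMeasurable (F i) μ) :
    ∫⁻ ω, (∑' i, F i ω) * ∑' j, F j ω ∂μ = ∑' i, ∑' j, ∫⁻ ω, F i ω * F j ω ∂μ := by
  simp_rw [← ENNReal.tsum_mul_right, ← ENNReal.tsum_mul_left]
  rw [lintegral_tsum (f := fun i ω => ∑' j, F i ω * F j ω)
    fun i => AEMeasurable.tsum fun j => (hF i).mul (hF j)]
  exact tsum_congr fun i => lintegral_tsum fun j => (hF i).mul (hF j)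

theorem lintegral_tsum_const_mul_sq {X : ι → Ω → ℝ≥0∞} (c : ι → ℝ≥0∞)
    (hX : ∀ i, AEMeasurable (X i) μ) (hindep : Pairwise fun i j => IndepFun (X i) (X j) μ)
    (h1 : ∀ i, ∫⁻ ω, X i ω ∂μ = 1) (h2 : ∀ i, ∫⁻ ω, X i ω ^ 2 ∂μ = 2) :
    ∫⁻ ω, (∑' i, c i * X i ω) ^ 2 ∂μ = (∑' i, c i) ^ 2 + ∑' i, c i ^ 2 := by
  classical
  have hpair : ∀ i j, ∫⁻ ω, c i * X i ω * (c j * X j ω) ∂μ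
      = c i * c j + if j = i then c i ^ 2 else 0 := by
    intro i j
    rw [lintegral_congr fun ω => mul_mul_mul_comm (c i) (X i ω) (c j) (X j ω),
      lintegral_const_mul'' (f := fun ω => X i ω * X j ω) _ ((hX i).mul (hX j))]
    rcases eq_or_ne j i with rfl | hji
    · rw [if_pos rfl, ← lintegral_congr fun ω => sq (X j ω), h2]
      ring
    · rw [if_neg hji, lintegral_mul_eq_lintegral_mul_lintegral_of_indepFun'' (hX i) (hX j)
        (hindep hji.symm), h1, h1, mul_one, mul_one, add_zero]
  rw [lintegral_congr fun ω => sq (∑' i, c i * X i ω),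
    lintegral_tsum_mul_tsum fun i => (hX i).const_mul (c i)]
  simp_rw [hpair, ENNReal.tsum_add, tsum_ite_eq, ENNReal.tsum_mul_left, ENNReal.tsum_mul_right,
    sq]

variable [IsProbabilityMeasure μ]

theorem integral_toReal_sub_sq_eq {G : Ω → ℝ≥0∞} (hG : AEMeasurable G μ) {m v : ℝ}
    (hm : 0 ≤ m) (hv : 0 ≤ v) (h1 : ∫⁻ ω, G ω ∂μ = ENNReal.ofReal m)
    (h2 : ∫⁻ ω, G ω ^ 2 ∂μ = ENNReal.ofReal (m ^ 2 + v)) :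
    ∫ ω, ((G ω).toReal - m) ^ 2 ∂μ = v := by
  have hfin : ∀ᵐ ω ∂μ, G ω < ∞ := ae_lt_top' hG (h1 ▸ ENNReal.ofReal_ne_top)
  have hY : AEMeasurable (fun ω => (G ω).toReal) μ := hG.ennreal_toReal
  have hmean : μ[fun ω => (G ω).toReal] = m := by
    rw [integral_toReal hG hfin, h1, ENNReal.toReal_ofReal hm]
  have hsq : ∫⁻ ω, ‖(G ω).toReal‖ₑ ^ 2 ∂μ = ∫⁻ ω, G ω ^ 2 ∂μ := by
    refine lintegral_congr_ae (hfin.mono fun ω hω => ?_)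
    simp only [Real.enorm_of_nonneg ENNReal.toReal_nonneg, ENNReal.ofReal_toReal hω.ne]
  rw [← hmean, ← variance_eq_integral hY, variance, evariance_def' hY.aestronglyMeasurable,
    hsq, h2, hmean, ← ENNReal.ofReal_sub _ (sq_nonneg m), add_sub_cancel_left,
    ENNReal.toReal_ofReal hv]

theorem integral_tsum_mul_sub_sq {X : ι → Ω → ℝ} {a : ι → ℝ} {m v : ℝ}
    (ha : ∀ i, 0 ≤ a i) (hm : HasSum a m) (hv : HasSum (fun i => a i ^ 2) v)
    (hX : ∀ i, AEMeasurable (X i) μ) (hX₀ : ∀ i, 0 ≤ᵐ[μ] X i)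
    (hindep : Pairwise fun i j => IndepFun (X i) (X j) μ)
    (h1 : ∀ i, ∫⁻ ω, ENNReal.ofReal (X i ω) ∂μ = 1)
    (h2 : ∀ i, ∫⁻ ω, ENNReal.ofReal (X i ω) ^ 2 ∂μ = 2) :
    ∫ ω, (∑' i, a i * X i ω - m) ^ 2 ∂μ = v := by
  set G : Ω → ℝ≥0∞ := fun ω => ∑' i, ENNReal.ofReal (a i) * ENNReal.ofReal (X i ω)
  have hXe : ∀ i, AEMeasurable (fun ω => ENNReal.ofReal (X i ω)) μ :=
    fun i => (hX i).ennreal_ofReal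
  have hG : AEMeasurable G μ := AEMeasurable.tsum fun i => (hXe i).const_mul _
  have hsum : ∀ᵐ ω ∂μ, ∑' i, a i * X i ω = (G ω).toReal := by
    filter_upwards [ae_all_iff.2 hX₀] with ω hω
    rw [ENNReal.tsum_toReal_eq fun i => ENNReal.mul_ne_top ENNReal.ofReal_ne_top
      ENNReal.ofReal_ne_top]
    refine tsum_congr fun i => ?_
    rw [← ENNReal.ofReal_mul (ha i), ENNReal.toReal_ofReal (mul_nonneg (ha i) (hω i))]
  have hc : ∑' i, ENNReal.ofReal (a i) = ENNReal.ofReal m := by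
    rw [← ENNReal.ofReal_tsum_of_nonneg ha hm.summable, hm.tsum_eq]
  have hc2 : ∑' i, ENNReal.ofReal (a i) ^ 2 = ENNReal.ofReal v := by
    simp_rw [← ENNReal.ofReal_pow (ha _)]
    rw [← ENNReal.ofReal_tsum_of_nonneg (fun i => sq_nonneg (a i)) hv.summable, hv.tsum_eq]
  rw [integral_congr_ae (hsum.mono fun ω hω => by rw [hω])]
  refine integral_toReal_sub_sq_eq hG (hm.nonneg ha) (hv.nonneg fun i => sq_nonneg _) ?_ ?_
  · rw [lintegral_tsum fun i => (hXe i).const_mul _]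
    simp_rw [lintegral_const_mul'' _ (hXe _), h1, mul_one, hc]
  · rw [lintegral_tsum_const_mul_sq _ hXe
      (fun i j hij => (hindep hij).comp ENNReal.measurable_ofReal ENNReal.measurable_ofReal) h1 h2,
      hc, hc2, ← ENNReal.ofReal_pow (hm.nonneg ha), ← ENNReal.ofReal_add (sq_nonneg m)
      (hv.nonneg fun i => sq_nonneg _)]

end Probability

/-- The 2-th central moment of the Kingman coalescent time `T n` satisfies
`E[(T n − 2/n)^2] = (4/3/n^3)(1 + O(1/n))` as `n → ∞`. -/
theorem kingman_Tn_central_moment_2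
    {Ω : Type*} [MeasurableSpace Ω] (μ : Measure Ω) [IsProbabilityMeasure μ]
    (S : ℕ → Ω → ℝ)
    (hindep : iIndepFun
      (fun i : {i : ℕ // 2 ≤ i} => S i) μ)
    (hexp : ∀ i : ℕ, 2 ≤ i → μ.map (S i) = expMeasure 1)
    (T : ℕ → Ω → ℝ)
    (hT : ∀ n ω, T n ω
      = ∑' i : ℕ, if n + 1 ≤ i then 2 * S i ω / ((i : ℝ) * ((i : ℝ) - 1)) else 0) :
    ∃ C : ℝ, 0 < C ∧ ∀ n : ℕ, 1 ≤ n →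
      |(∫ ω, (T n ω - 2 / n) ^ 2 ∂μ) - (4/3) / (n : ℝ) ^ 3| ≤ C / (n : ℝ) ^ 4 := by
  refine ⟨4 / 3, by norm_num, fun n hn => ?_⟩
  have hn₁ : (1 : ℝ) ≤ n := by exact_mod_cast hn
  set X : ℕ → Ω → ℝ := fun k => S (k + (n + 1))
  have hX : ∀ k, μ.map (X k) = expMeasure 1 := fun k => hexp _ (by omega)
  have hXindep : Pairwise fun k l => IndepFun (X k) (X l) μ := fun k l hkl =>
    hindep.indepFun (i := ⟨k + (n + 1), by omega⟩) (j := ⟨l + (n + 1), by omega⟩)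
      (by simpa using hkl)
  obtain ⟨v, hv, hv_le⟩ := hasSum_kingmanWeight_sq (x := n) (by positivity)
  simp_rw [hT, tsum_ite_eq_tsum_kingmanWeight]
  rw [integral_tsum_mul_sub_sq (kingmanWeight_nonneg n.cast_nonneg)
    (hasSum_kingmanWeight (by positivity)) hv
    (fun k => aemeasurable_of_map_eq_expMeasure (hX k))
    (fun k => ae_nonneg_of_map_eq_expMeasure (hX k)) hXindep
    (fun k => by simpa using lintegral_ofReal_pow_of_map_eq_expMeasure (hX k) 1)
    (fun k => by simpa using lintegral_ofReal_pow_of_map_eq_expMeasure (hX k) 2)]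
  calc |v - 4 / 3 / (n : ℝ) ^ 3| ≤ 4 / 3 / (n : ℝ) ^ 5 := hv_le
    _ ≤ 4 / 3 / (n : ℝ) ^ 4 := by gcongr; norm_num
end

section
/- Almost surely, n·T_n converges to 2 as n → ∞. -/
/-!
Write `α m` for the mean of `S 0, …, S (m - 1)`; by the strong law of large numbers `α m → 1`
almost surely. Since `S i = (i + 1) α (i + 1) - i α i`, one has for `i ≥ 2`
`S i / (i (i - 1)) = 2 α (i + 1) / (i (i - 1)) + α (i + 1) / i - α i / (i - 1)`,
so the tail sum telescopes:
`∑_{i > n} S i / (i (i - 1)) = 2 ∑_{i > n} α (i + 1) / (i (i - 1)) - α (n + 1) / n`.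
As `n ∑_{i > n} 1 / (i (i - 1)) = 1`, the first term times `n` is twice a weighted average of the
`α (i + 1)`, `i > n`, and tends to `2`, while the second times `n` tends to `1`. So `n` times the
tail sum tends to `1`, and `T n` is twice the tail sum.
-/

open MeasureTheory ProbabilityTheory Filter Topology Finset

lemma expMeasure_eq_withDensity (r : ℝ) :
    expMeasure r = volume.withDensity (exponentialPDF r) := rfl

lemma measurable_exponentialPDF (r : ℝ) : Measurable (exponentialPDF r) :=
  (measurable_exponentialPDFReal r).ennreal_ofReal

lemma ae_nonneg_expMeasure (r : ℝ) : ∀ᵐ x ∂expMeasure r, 0 ≤ x := by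
  rw [expMeasure_eq_withDensity, ae_withDensity_iff (measurable_exponentialPDF r)]
  exact ae_of_all _ fun x hx => not_lt.1 fun hneg => hx (exponentialPDF_of_neg hneg)

lemma toReal_exponentialPDF_smul_eq_indicator {r : ℝ} (hr : 0 < r) (x : ℝ) :
    (exponentialPDF r x).toReal • x
      = (Set.Ioi 0).indicator (fun t => r * (t ^ ((2 : ℝ) - 1) * Real.exp (-(r * t)))) x := by
  rcases lt_or_ge 0 x with hx | hx
  · rw [Set.indicator_of_mem (Set.mem_Ioi.2 hx), exponentialPDF_of_nonneg hx.le,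
      ENNReal.toReal_ofReal (by positivity)]
    norm_num
    ring
  · rw [Set.indicator_of_notMem (Set.notMem_Ioi.2 hx)]
    rcases hx.lt_or_eq with hx | rfl
    · simp [exponentialPDF_of_neg hx]
    · simp

lemma integrable_id_expMeasure {r : ℝ} (hr : 0 < r) : Integrable id (expMeasure r) := by
  rw [expMeasure_eq_withDensity, integrable_withDensity_iff_integrable_smul'
    (measurable_exponentialPDF r) (ae_of_all _ fun _ => ENNReal.ofReal_lt_top)]
  simp only [id, toReal_exponentialPDF_smul_eq_indicator hr]
  rw [integrable_indicator_iff measurableSet_Ioi]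
  refine Integrable.const_mul ?_ r
  simpa [IntegrableOn] using
    integrableOn_rpow_mul_exp_neg_mul_rpow (s := (2 : ℝ) - 1) (p := 1) (by norm_num) one_pos hr

lemma integral_id_expMeasure {r : ℝ} (hr : 0 < r) : ∫ x, x ∂expMeasure r = r⁻¹ := by
  rw [expMeasure_eq_withDensity, integral_withDensity_eq_integral_toReal_smul
    (measurable_exponentialPDF r) (ae_of_all _ fun _ => ENNReal.ofReal_lt_top)]
  simp only [toReal_exponentialPDF_smul_eq_indicator hr]
  rw [integral_indicator measurableSet_Ioi, integral_const_mul,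
    Real.integral_rpow_mul_exp_neg_mul_Ioi two_pos hr]
  norm_num
  field_simp

noncomputable section

def cesaroMean (b : ℕ → ℝ) (m : ℕ) : ℝ := (∑ k ∈ range m, b k) / m

/-- `T n ω = 2 * ∑' i, tailWeight n i * S i ω`. -/
def tailWeight (n i : ℕ) : ℝ := if n < i then ((i : ℝ) * (i - 1))⁻¹ else 0

end

lemma tendsto_cesaroMean_of_tendsto_cesaroMean_add {x : ℕ → ℝ} {a : ℝ} (s : ℕ)
    (h : Tendsto (cesaroMean fun k => x (k + s)) atTop (𝓝 a)) :
    Tendsto (cesaroMean x) atTop (𝓝 a) := by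
  rw [← tendsto_add_atTop_iff_nat s]
  have hsplit : ∀ m : ℕ, cesaroMean x (m + s) = (∑ k ∈ range s, x k) / (m + s : ℕ)
      + cesaroMean (fun k => x (k + s)) m * (m / (m + s : ℕ)) := by
    intro m
    rcases Nat.eq_zero_or_pos m with rfl | hm
    · simp [cesaroMean]
    · simp only [cesaroMean, add_comm m s, sum_range_add, add_div, add_comm _ s]
      field_simp
  simp_rw [hsplit]
  have hhead : Tendsto (fun m : ℕ => (∑ k ∈ range s, x k) / (m + s : ℕ)) atTop (𝓝 0) :=
    tendsto_const_nhds.div_atTop (tendsto_natCast_atTop_atTop.comp (tendsto_add_atTop_nat s))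
  have hratio : Tendsto (fun m : ℕ => (m : ℝ) / (m + s : ℕ)) atTop (𝓝 1) := by
    simpa using tendsto_natCast_div_add_atTop (s : ℝ)
  simpa using hhead.add (h.mul hratio)

lemma tailWeight_nonneg (n i : ℕ) : 0 ≤ tailWeight n i := by
  unfold tailWeight
  split_ifs with h
  · have : (1 : ℝ) ≤ i := by exact_mod_cast (show 1 ≤ i by omega)
    have : (0 : ℝ) ≤ (i : ℝ) - 1 := by linarith
    positivity
  · rfl

lemma tailWeight_succ {n M : ℕ} (h : n ≤ M) : tailWeight n (M + 1) = ((M + 1 : ℝ) * M)⁻¹ := by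
  simp [tailWeight, Nat.lt_succ_of_le h]

lemma sum_range_succ_tailWeight_mul_of_le {n M : ℕ} (h : M ≤ n) (γ : ℕ → ℝ) :
    ∑ i ∈ range (M + 1), tailWeight n i * γ i = 0 :=
  sum_eq_zero fun i hi => by
    simp [tailWeight, show ¬ n < i by have := mem_range.1 hi; omega]

lemma hasSum_tailWeight {n : ℕ} (hn : 0 < n) : HasSum (tailWeight n) (n : ℝ)⁻¹ := by
  have hpartial : ∀ M, n ≤ M →
      ∑ i ∈ range (M + 1), tailWeight n i = (n : ℝ)⁻¹ - (M : ℝ)⁻¹ := by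
    intro M hM
    induction M, hM using Nat.le_induction with
    | base => simpa using sum_range_succ_tailWeight_mul_of_le le_rfl 1
    | succ M hM ih =>
      have hM0 : (M : ℝ) ≠ 0 := by exact_mod_cast (show M ≠ 0 by omega)
      rw [sum_range_succ, ih, tailWeight_succ hM]
      push_cast
      field_simp
      ring
  rw [hasSum_iff_tendsto_nat_of_nonneg (tailWeight_nonneg n), ← tendsto_add_atTop_iff_nat 1]
  have hlim : Tendsto (fun M : ℕ => (n : ℝ)⁻¹ - (M : ℝ)⁻¹) atTop (𝓝 ((n : ℝ)⁻¹ - 0)) :=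
    tendsto_const_nhds.sub (tendsto_inv_atTop_zero.comp tendsto_natCast_atTop_atTop)
  rw [sub_zero] at hlim
  exact hlim.congr' ((eventually_ge_atTop n).mono fun M hM => (hpartial M hM).symm)

lemma summable_tailWeight_mul {n : ℕ} (hn : 0 < n) {γ : ℕ → ℝ} {g : ℝ}
    (hγ : Tendsto γ atTop (𝓝 g)) : Summable fun i => tailWeight n i * γ i := by
  obtain ⟨C, hC⟩ := (Metric.isBounded_range_of_tendsto γ hγ).exists_norm_le
  refine ((hasSum_tailWeight hn).summable.mul_right C).of_norm_bounded fun i => ?_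
  rw [norm_mul, Real.norm_of_nonneg (tailWeight_nonneg n i)]
  exact mul_le_mul_of_nonneg_left (hC _ (Set.mem_range_self i)) (tailWeight_nonneg n i)

lemma tendsto_mul_tsum_tailWeight_mul_of_tendsto {γ : ℕ → ℝ} {g : ℝ}
    (hγ : Tendsto γ atTop (𝓝 g)) :
    Tendsto (fun n : ℕ => n * ∑' i, tailWeight n i * γ i) atTop (𝓝 g) := by
  rw [Metric.tendsto_atTop]
  intro ε hε
  obtain ⟨N, hN⟩ := Metric.tendsto_atTop.1 hγ (ε / 2) (half_pos hε)
  refine ⟨max N 1, fun n hn => ?_⟩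
  have hn0 : 0 < n := by omega
  have hn0' : (0 : ℝ) < n := by exact_mod_cast hn0
  have hdev : ∑' i, tailWeight n i * γ i = ∑' i, tailWeight n i * (γ i - g) + g / n := by
    have hg : HasSum (fun i => tailWeight n i * g) (g / n) := by
      simpa [div_eq_inv_mul] using (hasSum_tailWeight hn0).mul_right g
    rw [← hg.tsum_eq, ← (summable_tailWeight_mul hn0 (hγ.sub_const g)).tsum_add hg.summable]
    simp only [mul_sub, sub_add_cancel]
  have hsmall : ‖∑' i, tailWeight n i * (γ i - g)‖ ≤ ε / 2 * (n : ℝ)⁻¹ := by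
    refine tsum_of_norm_bounded ((hasSum_tailWeight hn0).mul_left (ε / 2)) fun i => ?_
    rw [norm_mul, Real.norm_of_nonneg (tailWeight_nonneg n i), mul_comm]
    by_cases hi : n < i
    · exact mul_le_mul_of_nonneg_right (hN i (by omega)).le (tailWeight_nonneg n i)
    · simp [tailWeight, hi]
  rw [Real.dist_eq, hdev, mul_add, mul_div_cancel₀ _ hn0'.ne', add_sub_cancel_right, abs_mul,
    abs_of_pos hn0']
  calc (n : ℝ) * |∑' i, tailWeight n i * (γ i - g)| ≤ n * (ε / 2 * (n : ℝ)⁻¹) :=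
        mul_le_mul_of_nonneg_left hsmall hn0'.le
    _ = ε / 2 := by field_simp
    _ < ε := half_lt_self hε

lemma tailWeight_succ_mul_eq (b : ℕ → ℝ) {n M : ℕ} (hn : 0 < n) (hM : n ≤ M) :
    tailWeight n (M + 1) * b (M + 1) = 2 * (tailWeight n (M + 1) * cesaroMean b (M + 2))
      + cesaroMean b (M + 2) / (M + 1 : ℕ) - cesaroMean b (M + 1) / M := by
  have hM0 : (M : ℝ) ≠ 0 := by exact_mod_cast (show M ≠ 0 by omega)
  rw [tailWeight_succ hM]
  simp only [cesaroMean, show M + 2 = M + 1 + 1 from rfl, sum_range_succ _ (M + 1)]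
  push_cast
  field_simp
  ring

lemma hasSum_tailWeight_mul {b : ℕ → ℝ} {a : ℝ} {n : ℕ} (hn : 0 < n)
    (hb : ∀ i, n < i → 0 ≤ b i) (h : Tendsto (cesaroMean b) atTop (𝓝 a)) :
    HasSum (fun i => tailWeight n i * b i)
      (2 * ∑' i, tailWeight n i * cesaroMean b (i + 1) - cesaroMean b (n + 1) / n) := by
  have hshift : Tendsto (fun i => cesaroMean b (i + 1)) atTop (𝓝 a) :=
    h.comp (tendsto_add_atTop_nat 1)
  have hpartial : ∀ M, n ≤ M → ∑ i ∈ range (M + 1), tailWeight n i * b i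
      = 2 * ∑ i ∈ range (M + 1), tailWeight n i * cesaroMean b (i + 1)
        + cesaroMean b (M + 1) / M - cesaroMean b (n + 1) / n := by
    intro M hM
    induction M, hM using Nat.le_induction with
    | base => simp [sum_range_succ_tailWeight_mul_of_le le_rfl]
    | succ M hM ih =>
      rw [sum_range_succ _ (M + 1), ih, tailWeight_succ_mul_eq b hn hM,
        sum_range_succ (fun i => tailWeight n i * cesaroMean b (i + 1)) (M + 1)]
      ring
  have hnonneg : ∀ i, 0 ≤ tailWeight n i * b i := fun i => by
    by_cases hi : n < i
    · exact mul_nonneg (tailWeight_nonneg n i) (hb i hi)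
    · simp [tailWeight, hi]
  -- for nonnegative terms, convergence of the partial sums already gives a `HasSum`
  rw [hasSum_iff_tendsto_nat_of_nonneg hnonneg, ← tendsto_add_atTop_iff_nat 1]
  have hlim : Tendsto (fun M : ℕ => 2 * ∑ i ∈ range (M + 1), tailWeight n i * cesaroMean b (i + 1)
      + cesaroMean b (M + 1) / M - cesaroMean b (n + 1) / n) atTop
      (𝓝 (2 * ∑' i, tailWeight n i * cesaroMean b (i + 1) + 0 - cesaroMean b (n + 1) / n)) :=
    ((((summable_tailWeight_mul hn hshift).hasSum.tendsto_sum_nat.comp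
      (tendsto_add_atTop_nat 1)).const_mul 2).add
      (hshift.div_atTop tendsto_natCast_atTop_atTop)).sub_const _
  rw [add_zero] at hlim
  exact hlim.congr' ((eventually_ge_atTop n).mono fun M hM => (hpartial M hM).symm)

theorem tendsto_mul_tsum_tailWeight_mul {b : ℕ → ℝ} {a : ℝ} (hb : ∀ᶠ i in atTop, 0 ≤ b i)
    (h : Tendsto (cesaroMean b) atTop (𝓝 a)) :
    Tendsto (fun n : ℕ => n * ∑' i, tailWeight n i * b i) atTop (𝓝 a) := by
  have hshift : Tendsto (fun i => cesaroMean b (i + 1)) atTop (𝓝 a) :=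
    h.comp (tendsto_add_atTop_nat 1)
  have hlim := ((tendsto_mul_tsum_tailWeight_mul_of_tendsto hshift).const_mul 2).sub hshift
  rw [show 2 * a - a = a by ring] at hlim
  obtain ⟨N, hN⟩ := eventually_atTop.1 hb
  refine hlim.congr' ((eventually_ge_atTop (max N 1)).mono fun n hn => ?_)
  have hn0 : 0 < n := by omega
  dsimp only
  rw [(hasSum_tailWeight_mul hn0 (fun i hi => hN i (by omega)) h).tsum_eq, mul_sub,
    mul_div_cancel₀ _ (by exact_mod_cast hn0.ne' : (n : ℝ) ≠ 0)]
  ring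

theorem ae_tendsto_cesaroMean_of_iIndepFun_of_hasLaw {Ω : Type*} [MeasurableSpace Ω]
    {μ : Measure Ω} {ν : Measure ℝ} {S : ℕ → Ω → ℝ} (s : ℕ)
    (hindep : iIndepFun (fun i : {i : ℕ // s ≤ i} => S i) μ)
    (hlaw : ∀ i, s ≤ i → HasLaw (S i) ν μ) (hint : Integrable id ν) :
    ∀ᵐ ω ∂μ, Tendsto (cesaroMean (S · ω)) atTop (𝓝 (∫ x, x ∂ν)) := by
  have hpair : Pairwise fun j k => S (j + s) ⟂ᵢ[μ] S (k + s) := fun j k hjk =>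
    hindep.indepFun (i := ⟨j + s, by omega⟩) (j := ⟨k + s, by omega⟩)
      (by simpa [Subtype.ext_iff] using hjk)
  have hident : ∀ k, IdentDistrib (S (k + s)) (S (0 + s)) μ μ := fun k =>
    ⟨(hlaw _ (by omega)).aemeasurable, (hlaw _ (by omega)).aemeasurable,
      by rw [(hlaw _ (by omega)).map_eq, (hlaw _ (by omega)).map_eq]⟩
  have hint₀ : Integrable (S (0 + s)) μ := by
    simpa using (integrable_map_measure aestronglyMeasurable_id (hlaw s le_rfl).aemeasurable).1
      ((hlaw s le_rfl).map_eq ▸ hint)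
  filter_upwards [strong_law_ae_real (fun k => S (k + s)) hint₀ hpair hident] with ω hω
  rw [(hlaw _ (by omega)).integral_eq] at hω
  exact tendsto_cesaroMean_of_tendsto_cesaroMean_add s hω

theorem kingman_Tn_lln_general
    {Ω : Type*} [MeasurableSpace Ω] (μ : Measure Ω)
    (S : ℕ → Ω → ℝ)
    (hindep : iIndepFun
      (fun i : {i : ℕ // 2 ≤ i} => S i) μ)
    (hexp : ∀ i : ℕ, 2 ≤ i → μ.map (S i) = expMeasure 1)
    (T : ℕ → Ω → ℝ)
    (hT : ∀ n ω, T n ω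
      = ∑' i : ℕ, if n + 1 ≤ i then 2 * S i ω / ((i : ℝ) * ((i : ℝ) - 1)) else 0) :
    ∀ᵐ ω ∂μ, Tendsto (fun n : ℕ => (n : ℝ) * T n ω) atTop (𝓝 2) := by
  have hlaw : ∀ i, 2 ≤ i → HasLaw (S i) (expMeasure 1) μ := fun i hi =>
    ⟨.of_map_ne_zero (by simp [hexp i hi, (isProbabilityMeasure_expMeasure one_pos).ne_zero]),
      hexp i hi⟩
  have hnonneg : ∀ᵐ ω ∂μ, ∀ i, 2 ≤ i → 0 ≤ S i ω := by
    refine ae_all_iff.2 fun i => ?_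
    by_cases hi : 2 ≤ i
    · filter_upwards [ae_of_ae_map (hlaw i hi).aemeasurable
        ((hlaw i hi).map_eq ▸ ae_nonneg_expMeasure 1)] with ω hω _ using hω
    · exact ae_of_all _ fun ω h => absurd h hi
  have hslln := ae_tendsto_cesaroMean_of_iIndepFun_of_hasLaw 2 hindep hlaw
    (integrable_id_expMeasure one_pos)
  filter_upwards [hnonneg, hslln] with ω hω hmean
  rw [integral_id_expMeasure one_pos, inv_one] at hmean
  have hlim := (tendsto_mul_tsum_tailWeight_mul (eventually_atTop.2 ⟨2, hω⟩) hmean).const_mul 2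
  rw [mul_one] at hlim
  refine hlim.congr fun n => ?_
  rw [hT, mul_left_comm, ← tsum_mul_left]
  congr 2 with i
  simp only [tailWeight, Nat.lt_iff_add_one_le]
  split_ifs <;> ring

/-- Almost surely, `n · T n → 2` as `n → ∞` for the Kingman coalescent times. -/
theorem kingman_Tn_lln
    {Ω : Type*} [MeasurableSpace Ω] (μ : Measure Ω) [IsProbabilityMeasure μ]
    (S : ℕ → Ω → ℝ)
    (hindep : iIndepFun
      (fun i : {i : ℕ // 2 ≤ i} => S i) μ)
    (hexp : ∀ i : ℕ, 2 ≤ i → μ.map (S i) = expMeasure 1)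
    (T : ℕ → Ω → ℝ)
    (hT : ∀ n ω, T n ω
      = ∑' i : ℕ, if n + 1 ≤ i then 2 * S i ω / ((i : ℝ) * ((i : ℝ) - 1)) else 0) :
    ∀ᵐ ω ∂μ, Tendsto (fun n : ℕ => (n : ℝ) * T n ω) atTop (𝓝 2) :=
  kingman_Tn_lln_general μ S hindep hexp T hT
end
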